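/- For every γ > 0 and every integer N ≥ 2, P_sync(γ, N) ≤ √N · ( erf( γN/√2 ) )^{N−1}, where erf(x) = (2/√π) ∫_0^x e^{−t²} dt. -/

import Mathlib

open Real Matrix Finset MeasureTheory ProbabilityTheory

/-- The Kuramoto interaction vector field `f_i(θ) = Σ_j sin (θ_j - θ_i)`. -/
noncomputable def kuraF (N : ℕ) (θ : Fin N → ℝ) : Fin N → ℝ :=
  fun i => ∑ j, Real.sin (θ j - θ i)

/-- The Jacobian `J(θ)`: `J_ij = cos (θ_i - θ_j)` off the diagonal and
`J_ii = -Σ_{k ≠ i} cos (θ_k - θ_i)`. -/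
noncomputable def Jmat (N : ℕ) (θ : Fin N → ℝ) : Matrix (Fin N) (Fin N) ℝ :=
  Matrix.of fun i j =>
    if i = j then -∑ k ∈ Finset.univ \ {i}, Real.cos (θ k - θ i)
    else Real.cos (θ i - θ j)

/-- The set of frequency samples `ω` for which the (mean-adjusted) Kuramoto system with
coupling `γ` has a stable fully synchronized solution: some `θ` with
`ω_i - (1/N) Σ_j ω_j + γ f_i(θ) = 0` for all `i` and `J(θ)` negative semidefinite with
one-dimensional kernel. -/
def syncSet (N : ℕ) (γ : ℝ) : Set (Fin N → ℝ) :=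
  {ω | ∃ θ : Fin N → ℝ,
    (∀ i, ω i - (∑ j, ω j) / N + γ * kuraF N θ i = 0) ∧
    (-(Jmat N θ)).PosSemidef ∧
    Module.finrank ℝ (LinearMap.ker (Matrix.toLin' (Jmat N θ))) = 1}

/-- `P_sync(γ, N)`: the probability, for `ω` a vector of `N` i.i.d. standard Gaussian
random variables, that the Kuramoto system with coupling `γ` fully synchronizes. -/
noncomputable def Psync (γ : ℝ) (N : ℕ) : ℝ :=
  ((Measure.pi fun _ : Fin N => gaussianReal 0 1) (syncSet N γ)).toReal

/-- The error function `erf x = (2/√π) ∫_0^x e^{-t²} dt`. -/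
noncomputable def erf (x : ℝ) : ℝ :=
  (2 / Real.sqrt Real.pi) * ∫ t in (0 : ℝ)..x, Real.exp (-t ^ 2)

/-!
A synchronised `ω` satisfies `|ω i - mean ω| = γ |f_i(θ)| ≤ γ N`, so `P_sync` is bounded by the
Gaussian measure of the centred box `|ω i - mean ω| ≤ γ N`. Parametrise `ω` by its mean `m` and
its deviations `d_1, …, d_{N-1}` from the mean (a linear change of variables of determinant `N`).
As `‖ω‖² = N m² + ∑ d_j² + (∑ d_j)² ≥ N m² + ∑ d_j²`, the Gaussian density is dominated by a
product density, whose integral over the box is `N^{-1/2} P(|Z| ≤ γ N)^{N-1}`; with the Jacobian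
`N` and `P(|Z| ≤ c) = erf (c / √2)` this is the bound.
-/

open scoped ENNReal

section ProductIntegral

variable {ι : Type*} [Fintype ι] {X : ι → Type*} [∀ i, MeasurableSpace (X i)]
  (μ : ∀ i, Measure (X i)) [∀ i, SigmaFinite (μ i)]

theorem lmarginal_fintype_prod [DecidableEq ι] {f : ∀ i, X i → ℝ≥0∞}
    (hf : ∀ i, Measurable (f i)) (s : Finset ι) (x : ∀ i, X i) :
    (∫⋯∫⁻_s, (fun y => ∏ i, f i (y i)) ∂μ) x
      = (∏ i ∈ s, ∫⁻ y, f i y ∂μ i) * ∏ i ∈ sᶜ, f i (x i) := by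
  induction s using Finset.induction_on generalizing x with
  | empty => simp
  | @insert a s ha ih =>
    have hF : Measurable fun y : ∀ i, X i => ∏ i, f i (y i) :=
      Finset.measurable_prod _ fun i _ => (hf i).comp (measurable_pi_apply i)
    have hcompl : sᶜ = insert a (insert a s)ᶜ := by
      rw [compl_insert, insert_erase (mem_compl.2 ha)]
    have hrest (y : X a) :
        ∏ i ∈ (insert a s)ᶜ, f i (Function.update x a y i) = ∏ i ∈ (insert a s)ᶜ, f i (x i) :=
      prod_congr rfl fun i hi => by
        rw [Function.update_of_ne]; rintro rfl; simp at hi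
    simp_rw [lmarginal_insert _ hF ha, ih, hcompl,
      prod_insert (notMem_compl.2 (mem_insert_self a s)), Function.update_self, hrest,
      prod_insert ha]
    rw [lintegral_const_mul _ ((hf a).mul_const _), lintegral_mul_const _ (hf a)]
    ring

theorem lintegral_fintype_prod_eq_prod {f : ∀ i, X i → ℝ≥0∞} (hf : ∀ i, Measurable (f i)) :
    ∫⁻ x, ∏ i, f i (x i) ∂Measure.pi μ = ∏ i, ∫⁻ y, f i y ∂μ i := by
  classical
  rcases isEmpty_or_nonempty (∀ i, X i) with hX | ⟨⟨x⟩⟩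
  · obtain ⟨i, hi⟩ := isEmpty_pi.1 hX
    rw [prod_eq_zero (mem_univ i) (lintegral_of_isEmpty _ _), lintegral_of_isEmpty]
  rw [lintegral_eq_lmarginal_univ x, lmarginal_fintype_prod μ hf]
  simp

theorem MeasureTheory.Measure.pi_withDensity {f : ∀ i, X i → ℝ≥0∞} (hf : ∀ i, Measurable (f i))
    [∀ i, SigmaFinite ((μ i).withDensity (f i))] :
    Measure.pi (fun i => (μ i).withDensity (f i))
      = (Measure.pi μ).withDensity (fun x => ∏ i, f i (x i)) := by
  refine Measure.pi_eq fun s hs => ?_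
  rw [withDensity_apply _ (MeasurableSet.univ_pi hs), Measure.restrict_pi_pi,
    lintegral_fintype_prod_eq_prod _ hf]
  simp_rw [withDensity_apply _ (hs _)]

end ProductIntegral

theorem lintegral_eq_abs_det_mul_lintegral_comp {ι : Type*} [Fintype ι]
    {L : (ι → ℝ) →ₗ[ℝ] ι → ℝ} (hL : LinearMap.det L ≠ 0) {F : (ι → ℝ) → ℝ≥0∞}
    (hF : Measurable F) :
    ∫⁻ x, F x = ENNReal.ofReal |LinearMap.det L| * ∫⁻ x, F (L x) := by
  rw [← lintegral_map hF (LinearMap.continuous_of_finiteDimensional L).measurable,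
    Real.map_linearMap_volume_pi_eq_smul_volume_pi hL, lintegral_smul_measure, smul_eq_mul,
    ← mul_assoc, ← ENNReal.ofReal_mul (abs_nonneg _), ← abs_mul, mul_inv_cancel₀ hL]
  simp

theorem intervalIntegral.integral_symmetric_of_even {f : ℝ → ℝ} (hf : Continuous f)
    (heven : ∀ x, f (-x) = f x) (a : ℝ) :
    ∫ x in -a..a, f x = 2 * ∫ x in 0..a, f x := by
  have hneg : ∫ x in -a..0, f x = ∫ x in 0..a, f x := by
    simpa [heven] using (intervalIntegral.integral_comp_neg (a := 0) (b := a) f).symm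
  rw [← intervalIntegral.integral_add_adjacent_intervals (b := 0) (hf.intervalIntegrable _ _)
    (hf.intervalIntegrable _ _), hneg, two_mul]

section Gaussian

variable {ι : Type*} [Fintype ι]

theorem prod_gaussianPDFReal (x : ι → ℝ) :
    ∏ i, gaussianPDFReal 0 1 (x i)
      = (√(2 * π))⁻¹ ^ Fintype.card ι * exp (-(∑ i, x i ^ 2) / 2) := by
  simp [gaussianPDFReal, prod_mul_distrib, ← exp_sum, neg_div, sum_div]

theorem prod_gaussianPDF_le_of_sum_sq_le {x y : ι → ℝ} (h : ∑ i, y i ^ 2 ≤ ∑ i, x i ^ 2) :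
    ∏ i, gaussianPDF 0 1 (x i) ≤ ∏ i, gaussianPDF 0 1 (y i) := by
  simp only [gaussianPDF, ← ENNReal.ofReal_prod_of_nonneg fun i _ => gaussianPDFReal_nonneg 0 1 _,
    prod_gaussianPDFReal]
  gcongr

theorem pi_gaussianReal_eq_withDensity :
    Measure.pi (fun _ : ι => gaussianReal 0 1)
      = volume.withDensity (fun x => ∏ i, gaussianPDF 0 1 (x i)) := by
  have hdensity : gaussianReal 0 1 = volume.withDensity (gaussianPDF 0 1) :=
    gaussianReal_of_var_ne_zero 0 one_ne_zero
  have : SigmaFinite (volume.withDensity (gaussianPDF 0 1)) := hdensity ▸ inferInstance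
  rw [hdensity, Measure.pi_withDensity _ fun _ => measurable_gaussianPDF 0 1, volume_pi]

theorem lintegral_gaussianPDF_comp_mul_left {a : ℝ} (ha : 0 < a) :
    ∫⁻ x, gaussianPDF 0 1 (a * x) = ENNReal.ofReal a⁻¹ := by
  simp_rw [gaussianPDF, gaussianPDFReal_mul ha.ne', ENNReal.ofReal_mul (abs_nonneg _)]
  rw [lintegral_const_mul _ (measurable_gaussianPDFReal _ _).ennreal_ofReal, ← gaussianPDF_def,
    lintegral_gaussianPDF_eq_one _ (by simp [← NNReal.coe_eq_zero, ha.ne']), mul_one,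
    abs_of_pos (inv_pos.2 ha)]

theorem gaussianReal_real_Icc {c : ℝ} (hc : 0 ≤ c) :
    (gaussianReal 0 1).real (Set.Icc (-c) c) = erf (c / √2) := by
  have hpdf : gaussianPDFReal 0 1 = fun x => (√(2 * π))⁻¹ * exp (-(x / √2) ^ 2) := by
    ext x
    simp [gaussianPDFReal, div_pow, neg_div]
  rw [measureReal_def, gaussianReal_apply_eq_integral 0 one_ne_zero,
    ENNReal.toReal_ofReal (setIntegral_nonneg measurableSet_Icc fun x _ =>
      gaussianPDFReal_nonneg 0 1 x),
    integral_Icc_eq_integral_Ioc, ← intervalIntegral.integral_of_le (by linarith), hpdf,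
    intervalIntegral.integral_const_mul,
    intervalIntegral.integral_comp_div (fun t => exp (-t ^ 2)) (by positivity), neg_div,
    intervalIntegral.integral_symmetric_of_even (by fun_prop) (by simp), erf, smul_eq_mul,
    sqrt_mul zero_le_two]
  field_simp

end Gaussian

/-- The vector with mean `v 0` whose deviations from the mean at the indices `j.succ` are
`v j.succ`. -/
noncomputable def ofMeanAndDeviations (n : ℕ) : (Fin (n + 1) → ℝ) →ₗ[ℝ] Fin (n + 1) → ℝ :=
  LinearMap.transvection (∑ i, LinearMap.proj i) (Fin.cons 0 1) ∘ₗ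
    LinearMap.transvection (-∑ j : Fin n, LinearMap.proj j.succ) (Pi.single 0 1)

namespace ofMeanAndDeviations

variable {n : ℕ}

theorem det : LinearMap.det (ofMeanAndDeviations n) = n + 1 := by
  simp [ofMeanAndDeviations, LinearMap.det_comp, Fin.sum_univ_succ, add_comm]

theorem apply_zero (v : Fin (n + 1) → ℝ) :
    ofMeanAndDeviations n v 0 = v 0 - ∑ j : Fin n, v j.succ := by
  simp [ofMeanAndDeviations, LinearMap.transvection.apply, sub_eq_add_neg]

theorem apply_succ (v : Fin (n + 1) → ℝ) (j : Fin n) :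
    ofMeanAndDeviations n v j.succ = v j.succ + v 0 := by
  simp [ofMeanAndDeviations, LinearMap.transvection.apply, Fin.sum_univ_succ]

theorem sum_apply (v : Fin (n + 1) → ℝ) :
    ∑ i, ofMeanAndDeviations n v i = (n + 1) * v 0 := by
  simp only [Fin.sum_univ_succ, apply_zero, apply_succ, sum_add_distrib, sum_const, card_univ,
    Fintype.card_fin, nsmul_eq_mul]
  ring

theorem sum_sq_apply (v : Fin (n + 1) → ℝ) :
    ∑ i, ofMeanAndDeviations n v i ^ 2
      = (n + 1) * v 0 ^ 2 + (∑ j : Fin n, v j.succ) ^ 2 + ∑ j : Fin n, v j.succ ^ 2 := by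
  simp only [Fin.sum_univ_succ, apply_zero, apply_succ, add_sq, sum_add_distrib, sum_const,
    card_univ, Fintype.card_fin, nsmul_eq_mul, ← sum_mul, ← mul_sum]
  ring

end ofMeanAndDeviations

def centeredBox (N : ℕ) (c : ℝ) : Set (Fin N → ℝ) :=
  {ω | ∀ i, |ω i - (∑ j, ω j) / N| ≤ c}

theorem measurableSet_centeredBox (N : ℕ) (c : ℝ) : MeasurableSet (centeredBox N c) := by
  simp only [centeredBox, Set.ofPred_forall]
  exact MeasurableSet.iInter fun i => measurableSet_le (by fun_prop) measurable_const

theorem abs_kuraF_le (N : ℕ) (θ : Fin N → ℝ) (i : Fin N) : |kuraF N θ i| ≤ N :=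
  calc |kuraF N θ i| ≤ ∑ j, |sin (θ j - θ i)| := abs_sum_le_sum_abs _ _
    _ ≤ ∑ _j : Fin N, (1 : ℝ) := sum_le_sum fun j _ => abs_sin_le_one _
    _ = N := by simp

theorem syncSet_subset_centeredBox {N : ℕ} {γ : ℝ} (hγ : 0 ≤ γ) :
    syncSet N γ ⊆ centeredBox N (γ * N) := by
  rintro ω ⟨θ, hθ, -⟩ i
  rw [show ω i - (∑ j, ω j) / N = -(γ * kuraF N θ i) by linarith [hθ i], abs_neg, abs_mul,
    abs_of_nonneg hγ]
  exact mul_le_mul_of_nonneg_left (abs_kuraF_le N θ i) hγ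

theorem indicator_centeredBox_ofMeanAndDeviations_le {n : ℕ} {c : ℝ} (v : Fin (n + 1) → ℝ) :
    (centeredBox (n + 1) c).indicator (fun ω => ∏ i, gaussianPDF 0 1 (ω i))
        (ofMeanAndDeviations n v)
      ≤ gaussianPDF 0 1 (√(n + 1) * v 0)
          * ∏ j : Fin n, (Set.Icc (-c) c).indicator (gaussianPDF 0 1) (v j.succ) := by
  by_cases hv : ofMeanAndDeviations n v ∉ centeredBox (n + 1) c
  · simp [hv]
  rw [not_not] at hv
  have hmean : (∑ i, ofMeanAndDeviations n v i) / (n + 1 : ℕ) = v 0 := by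
    rw [ofMeanAndDeviations.sum_apply]
    push_cast
    field_simp
  have hdev (j : Fin n) : v j.succ ∈ Set.Icc (-c) c := by
    have := hv j.succ
    rwa [hmean, ofMeanAndDeviations.apply_succ, add_sub_cancel_right, abs_le] at this
  rw [Set.indicator_of_mem hv]
  simp_rw [Set.indicator_of_mem (hdev _)]
  calc ∏ i, gaussianPDF 0 1 (ofMeanAndDeviations n v i)
      ≤ ∏ i, gaussianPDF 0 1
          ((Fin.cons (√(n + 1) * v 0) fun j => v j.succ : Fin (n + 1) → ℝ) i) := by
        refine prod_gaussianPDF_le_of_sum_sq_le ?_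
        rw [ofMeanAndDeviations.sum_sq_apply, Fin.sum_univ_succ]
        simp only [Fin.cons_zero, Fin.cons_succ, mul_pow,
          sq_sqrt (by positivity : (0 : ℝ) ≤ n + 1)]
        linarith [sq_nonneg (∑ j : Fin n, v j.succ)]
    _ = _ := by simp [Fin.prod_univ_succ]

theorem pi_gaussianReal_centeredBox_le (n : ℕ) (c : ℝ) :
    Measure.pi (fun _ : Fin (n + 1) => gaussianReal 0 1) (centeredBox (n + 1) c)
      ≤ ENNReal.ofReal √(n + 1) * gaussianReal 0 1 (Set.Icc (-c) c) ^ n := by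
  set G : (Fin (n + 1) → ℝ) → ℝ≥0∞ := fun ω => ∏ i, gaussianPDF 0 1 (ω i)
  set f : Fin (n + 1) → ℝ → ℝ≥0∞ :=
    Fin.cons (fun x => gaussianPDF 0 1 (√(n + 1) * x))
      fun _ => (Set.Icc (-c) c).indicator (gaussianPDF 0 1)
  have hB := measurableSet_centeredBox (n + 1) c
  have hG : Measurable G :=
    Finset.measurable_prod _ fun i _ => (measurable_gaussianPDF 0 1).comp (measurable_pi_apply i)
  have hf : ∀ i, Measurable (f i) :=
    Fin.cases ((measurable_gaussianPDF 0 1).comp (measurable_id.const_mul _))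
      fun _ => (measurable_gaussianPDF 0 1).indicator measurableSet_Icc
  have hpos : (0 : ℝ) < n + 1 := by positivity
  have hdet : LinearMap.det (ofMeanAndDeviations n) ≠ 0 := by
    rw [ofMeanAndDeviations.det]; exact hpos.ne'
  calc _ = ∫⁻ ω, (centeredBox (n + 1) c).indicator G ω := by
        rw [pi_gaussianReal_eq_withDensity, withDensity_apply _ hB, lintegral_indicator hB]
    _ = ENNReal.ofReal (n + 1)
          * ∫⁻ v, (centeredBox (n + 1) c).indicator G (ofMeanAndDeviations n v) := by
        rw [lintegral_eq_abs_det_mul_lintegral_comp hdet (hG.indicator hB),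
          ofMeanAndDeviations.det, abs_of_pos hpos]
    _ ≤ ENNReal.ofReal (n + 1) * ∫⁻ v : Fin (n + 1) → ℝ, ∏ i, f i (v i) := by
        gcongr with v
        exact (indicator_centeredBox_ofMeanAndDeviations_le v).trans_eq
          (by simp [f, Fin.prod_univ_succ])
    _ = ENNReal.ofReal (n + 1)
          * (ENNReal.ofReal (√(n + 1))⁻¹ * gaussianReal 0 1 (Set.Icc (-c) c) ^ n) := by
        rw [volume_pi, lintegral_fintype_prod_eq_prod _ hf, Fin.prod_univ_succ]
        simp [f, lintegral_gaussianPDF_comp_mul_left (sqrt_pos.2 hpos),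
          lintegral_indicator measurableSet_Icc, gaussianReal_apply]
    _ = ENNReal.ofReal √(n + 1) * gaussianReal 0 1 (Set.Icc (-c) c) ^ n := by
        rw [← mul_assoc, ← ENNReal.ofReal_mul hpos.le]
        congr 2
        rw [← div_eq_mul_inv, div_sqrt]

theorem stmt16 (N : ℕ) (hN : 2 ≤ N) (γ : ℝ) (hγ : 0 < γ) :
    Psync γ N ≤ Real.sqrt N * erf (γ * N / Real.sqrt 2) ^ (N - 1) := by
  obtain ⟨n, rfl⟩ : ∃ n, N = n + 1 := ⟨N - 1, by omega⟩
  have hbound := (measure_mono (syncSet_subset_centeredBox hγ.le)).trans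
    (pi_gaussianReal_centeredBox_le n (γ * (n + 1 : ℕ)))
  rw [Psync, Nat.add_sub_cancel, ← gaussianReal_real_Icc (by positivity)]
  calc _ ≤ _ := ENNReal.toReal_mono (by finiteness) hbound
    _ = _ := by simp [ENNReal.toReal_mul, measureReal_def]
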